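/- Let e₁, e₂, e₃, e₄ ∈ S^2 and z₁, z₂, z₃, z₄ ∈ C^4 be unit vectors, set θ_{jk} = θ(e_j, e_k) and φ = min{θ₁₃, θ₁₄, θ₂₃, θ₂₄}. Then the quadrilinear quantity q = Σ_{μ=0}^3 ⟨α^μ Π(e₁)z₁, Π(e₂)z₂⟩⟨α_μ Π(e₃)z₃, Π(e₄)z₄⟩ satisfies |q| ≲ θ₁₂θ₃₄ + φ·max(θ₁₂, θ₃₄) + φ², with an absolute implicit constant. -/

import Mathlib

noncomputable section

open InnerProductGeometry

abbrev E3 := EuclideanSpace ℝ (Fin 3)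
abbrev C4 := EuclideanSpace ℂ (Fin 4)

/-- The 4×4 Dirac matrices `α¹, α², α³`, built from the Pauli matrices. -/
def diracAlpha : Fin 3 → Matrix (Fin 4) (Fin 4) ℂ
  | 0 => !![0,0,0,1; 0,0,1,0; 0,1,0,0; 1,0,0,0]
  | 1 => !![0,0,0,-Complex.I; 0,0,Complex.I,0; 0,-Complex.I,0,0; Complex.I,0,0,0]
  | 2 => !![0,0,1,0; 0,0,0,-1; 1,0,0,0; 0,-1,0,0]

/-- The Dirac projection `Π(ξ) = (1/2)(I + ξ^j α_j / |ξ|)`. -/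
def diracPi (ξ : E3) : Matrix (Fin 4) (Fin 4) ℂ :=
  (1/2 : ℂ) • ((1 : Matrix (Fin 4) (Fin 4) ℂ) +
    (‖ξ‖⁻¹ : ℝ) • ∑ j : Fin 3, (ξ j : ℂ) • diracAlpha j)


/-!
For a unit vector `e`, `Π(e)` projects onto the `+1` eigenspace of `α·e`, and for `x, y` in that
eigenspace the Clifford relations force `⟨αʲx, y⟩ = eʲ ⟨x, y⟩`: the current
`(⟨x, y⟩, ⟨αʲx, y⟩)` is the multiple `⟨x, y⟩ (1, e)` of a null vector. Since
`Π(e₂) = Π(e₁) + α·(e₂ - e₁) / 2`, the current of `(Π(e₁)z₁, Π(e₂)z₂)` is `c (1, g) + R` for either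
choice `g ∈ {e₁, e₂}`, with `|c| ≤ 1`, `|R| ≲ θ₁₂`, and the Minkowski pairing of `R` with a null
vector `(1, h)` equal to `⟨α·(h - g) x, y⟩ = O(|h - g| θ₁₂)`. Expanding `q` bilinearly with
`h ∈ {e₃, e₄}`, the main term is `c d (g·h - 1) = O(θ(g, h)²)`, the cross terms are
`O(θ(g, h) θ₁₂)` and `O(θ(g, h) θ₃₄)`, the error term is `O(θ₁₂ θ₃₄)`, and `g, h` are chosen to
realise `φ`.
-/

open scoped InnerProductSpace

section Angle

variable {V : Type*} [NormedAddCommGroup V] [InnerProductSpace ℝ V]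

theorem InnerProductGeometry.one_sub_inner_le_angle_sq_div_two {x y : V} (hx : ‖x‖ = 1)
    (hy : ‖y‖ = 1) : 1 - ⟪x, y⟫_ℝ ≤ angle x y ^ 2 / 2 := by
  have := Real.one_sub_sq_div_two_le_cos (x := angle x y)
  rw [cos_angle, hx, hy, mul_one, div_one] at this
  linarith

theorem InnerProductGeometry.norm_sub_le_angle {x y : V} (hx : ‖x‖ = 1) (hy : ‖y‖ = 1) :
    ‖x - y‖ ≤ angle x y := by
  refine abs_le_of_sq_le_sq' ?_ (angle_nonneg x y) |>.2
  rw [norm_sub_sq_real, hx, hy]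
  linarith [one_sub_inner_le_angle_sq_div_two hx hy]

end Angle

theorem exists_eq_min_min {α β γ : Type*} [LinearOrder γ] (f : α → β → γ) (a b : α) (c d : β) :
    ∃ g, (g = a ∨ g = b) ∧ ∃ h, (h = c ∨ h = d) ∧
      f g h = min (min (f a c) (f a d)) (min (f b c) (f b d)) := by
  rcases min_choice (min (f a c) (f a d)) (min (f b c) (f b d)) with hab | hab <;> rw [hab]
  · rcases min_choice (f a c) (f a d) with hcd | hcd <;> rw [hcd]
    exacts [⟨a, .inl rfl, c, .inl rfl, rfl⟩, ⟨a, .inl rfl, d, .inr rfl, rfl⟩]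
  · rcases min_choice (f b c) (f b d) with hcd | hcd <;> rw [hcd]
    exacts [⟨b, .inr rfl, c, .inl rfl, rfl⟩, ⟨b, .inr rfl, d, .inr rfl, rfl⟩]

section Clifford

variable {ι H : Type*} [NormedAddCommGroup H] [InnerProductSpace ℂ H]

theorem LinearMap.IsSymmetric.norm_map_eq_of_mul_self {T : Module.End ℂ H} (hT : T.IsSymmetric)
    {r : ℝ} (hr : 0 ≤ r) (hT2 : T * T = (r : ℂ) ^ 2 • 1) (x : H) : ‖T x‖ = r * ‖x‖ := by
  have hinner : ⟪T x, T x⟫_ℂ = (r : ℂ) ^ 2 * ⟪x, x⟫_ℂ := by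
    rw [hT, ← Module.End.mul_apply, hT2, LinearMap.smul_apply, Module.End.one_apply,
      inner_smul_right]
  have hsq : ‖T x‖ ^ 2 = (r * ‖x‖) ^ 2 := by
    rw [mul_pow, @norm_sq_eq_re_inner ℂ, @norm_sq_eq_re_inner ℂ _ _ _ _ x, hinner,
      ← Complex.ofReal_pow, RCLike.re_to_complex, RCLike.re_to_complex, Complex.re_ofReal_mul]
  exact (sq_eq_sq₀ (norm_nonneg _) (by positivity)).1 hsq

structure IsCliffordFamily (a : ι → Module.End ℂ H) : Prop where
  isSymmetric : ∀ i, (a i).IsSymmetric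
  mul_self : ∀ i, a i * a i = 1
  anticomm : ∀ i j, i ≠ j → a i * a j + a j * a i = 0

def current (a : ι → Module.End ℂ H) (x y : H) : ℂ × (ι → ℂ) :=
  (⟪x, y⟫_ℂ, fun i => ⟪a i x, y⟫_ℂ)

theorem current_add_left (a : ι → Module.End ℂ H) (x d y : H) :
    current a (x + d) y = current a x y + current a d y := by
  ext <;> simp [current]

theorem current_add_right (a : ι → Module.End ℂ H) (x y d : H) :
    current a x (y + d) = current a x y + current a x d := by
  ext <;> simp [current]

theorem IsCliffordFamily.norm_apply {a : ι → Module.End ℂ H} (ha : IsCliffordFamily a) (i : ι)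
    (x : H) : ‖a i x‖ = ‖x‖ := by
  simpa using (ha.isSymmetric i).norm_map_eq_of_mul_self zero_le_one (by simp [ha.mul_self]) x

variable [Fintype ι]

def alphaDot (a : ι → Module.End ℂ H) (v : EuclideanSpace ℝ ι) : Module.End ℂ H :=
  ∑ i, (v i : ℂ) • a i

def diracProj (a : ι → Module.End ℂ H) (e : EuclideanSpace ℝ ι) : Module.End ℂ H :=
  (1 / 2 : ℂ) • (1 + alphaDot a e)

def minkowski (X Y : ℂ × (ι → ℂ)) : ℂ := -(X.1 * Y.1) + X.2 ⬝ᵥ Y.2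

def nullVec (g : EuclideanSpace ℝ ι) : ℂ × (ι → ℂ) := (1, fun i => (g i : ℂ))

theorem alphaDot_sub (a : ι → Module.End ℂ H) (u v : EuclideanSpace ℝ ι) :
    alphaDot a (u - v) = alphaDot a u - alphaDot a v := by
  simp only [alphaDot, PiLp.sub_apply, Complex.ofReal_sub, sub_smul, Finset.sum_sub_distrib]

theorem diracProj_eq_add (a : ι → Module.End ℂ H) (e g : EuclideanSpace ℝ ι) :
    diracProj a e = diracProj a g + (1 / 2 : ℂ) • alphaDot a (e - g) := by
  rw [diracProj, diracProj, alphaDot_sub]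
  module

theorem minkowski_comm (X Y : ℂ × (ι → ℂ)) : minkowski X Y = minkowski Y X := by
  rw [minkowski, minkowski, mul_comm, dotProduct_comm]

theorem minkowski_smul_add_smul_add (c d : ℂ) (X Y R T : ℂ × (ι → ℂ)) :
    minkowski (c • X + R) (d • Y + T) =
      c * d * minkowski X Y + c * minkowski X T + d * minkowski R Y + minkowski R T := by
  simp only [minkowski, Prod.fst_add, Prod.snd_add, Prod.smul_fst, Prod.smul_snd, add_dotProduct,
    dotProduct_add, smul_dotProduct, dotProduct_smul, smul_eq_mul]
  ring

theorem norm_minkowski_le (X Y : ℂ × (ι → ℂ)) :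
    ‖minkowski X Y‖ ≤ (Fintype.card ι + 1) * (‖X‖ * ‖Y‖) := by
  have hprod {x y : ℂ} (hx : ‖x‖ ≤ ‖X‖) (hy : ‖y‖ ≤ ‖Y‖) : ‖x * y‖ ≤ ‖X‖ * ‖Y‖ :=
    (norm_mul x y).trans_le (mul_le_mul hx hy (norm_nonneg _) (norm_nonneg _))
  have hsnd (Z : ℂ × (ι → ℂ)) (i : ι) : ‖Z.2 i‖ ≤ ‖Z‖ := (norm_le_pi_norm _ i).trans (norm_snd_le Z)
  calc ‖minkowski X Y‖ ≤ ‖X.1 * Y.1‖ + ∑ i, ‖X.2 i * Y.2 i‖ :=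
        (norm_add_le _ _).trans (by rw [norm_neg]; gcongr; exact norm_sum_le _ _)
    _ ≤ ‖X‖ * ‖Y‖ + ∑ _i : ι, ‖X‖ * ‖Y‖ := by
        gcongr with i
        · exact hprod (norm_fst_le X) (norm_fst_le Y)
        · exact hprod (hsnd X i) (hsnd Y i)
    _ = (Fintype.card ι + 1) * (‖X‖ * ‖Y‖) := by simp; ring

theorem minkowski_nullVec_nullVec (g h : EuclideanSpace ℝ ι) :
    minkowski (nullVec g) (nullVec h) = ((-1 + ⟪g, h⟫_ℝ : ℝ) : ℂ) := by
  simp [minkowski, nullVec, dotProduct, PiLp.inner_apply, mul_comm]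

theorem norm_minkowski_nullVec_nullVec_le {g h : EuclideanSpace ℝ ι} (hg : ‖g‖ = 1)
    (hh : ‖h‖ = 1) : ‖minkowski (nullVec g) (nullVec h)‖ ≤ angle g h ^ 2 / 2 := by
  have hinner : ⟪g, h⟫_ℝ ≤ 1 := (real_inner_le_norm g h).trans (by rw [hg, hh, one_mul])
  rw [minkowski_nullVec_nullVec, Complex.norm_real, Real.norm_of_nonpos (by linarith)]
  linarith [one_sub_inner_le_angle_sq_div_two hg hh]

theorem minkowski_current_nullVec (a : ι → Module.End ℂ H) (x y : H) (h : EuclideanSpace ℝ ι) :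
    minkowski (current a x y) (nullVec h) = ⟪alphaDot a h x, y⟫_ℂ - ⟪x, y⟫_ℂ := by
  simp only [minkowski, current, nullVec, dotProduct, alphaDot, LinearMap.sum_apply,
    LinearMap.smul_apply, sum_inner, inner_smul_left, Complex.conj_ofReal, mul_one, mul_comm]
  ring

def IsNearNull (g : EuclideanSpace ℝ ι) (ε : ℝ) (X : ℂ × (ι → ℂ)) : Prop :=
  ∃ (c : ℂ) (R : ℂ × (ι → ℂ)), X = c • nullVec g + R ∧ ‖c‖ ≤ 1 ∧ ‖R‖ ≤ ε ∧
    ∀ h, ‖minkowski R (nullVec h)‖ ≤ ‖h - g‖ * ε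

theorem IsNearNull.norm_minkowski_le {g h : EuclideanSpace ℝ ι} {ε δ : ℝ}
    {X Y : ℂ × (ι → ℂ)} (hX : IsNearNull g ε X) (hY : IsNearNull h δ Y) :
    ‖minkowski X Y‖ ≤ ‖minkowski (nullVec g) (nullVec h)‖ + ‖g - h‖ * (ε + δ) +
      (Fintype.card ι + 1) * (ε * δ) := by
  obtain ⟨c, R, rfl, hc, hR, hRh⟩ := hX
  obtain ⟨d, T, rfl, hd, hT, hTg⟩ := hY
  have hscale {u : ℂ} (hu : ‖u‖ ≤ 1) (w : ℂ) : ‖u * w‖ ≤ ‖w‖ := by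
    rw [norm_mul]; exact mul_le_of_le_one_left (norm_nonneg w) hu
  have hcd : ‖c * d‖ ≤ 1 := by rw [norm_mul]; exact mul_le_one₀ hc (norm_nonneg d) hd
  have hgT : ‖minkowski (nullVec g) T‖ ≤ ‖g - h‖ * δ := minkowski_comm T _ ▸ hTg g
  have hRh' : ‖minkowski R (nullVec h)‖ ≤ ‖g - h‖ * ε := norm_sub_rev h g ▸ hRh h
  have hRT : ‖minkowski R T‖ ≤ (Fintype.card ι + 1) * (ε * δ) :=
    (_root_.norm_minkowski_le R T).trans (by gcongr; exact (norm_nonneg R).trans hR)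
  rw [minkowski_smul_add_smul_add]
  refine norm_add₄_le.trans ?_
  linarith [hscale hcd (minkowski (nullVec g) (nullVec h)), hscale hc (minkowski (nullVec g) T),
    hscale hd (minkowski R (nullVec h))]

namespace IsCliffordFamily

variable {a : ι → Module.End ℂ H}

theorem isSymmetric_alphaDot (ha : IsCliffordFamily a) (v : EuclideanSpace ℝ ι) :
    (alphaDot a v).IsSymmetric := by
  intro x y
  simp only [alphaDot, LinearMap.sum_apply, LinearMap.smul_apply, sum_inner,
    inner_sum, inner_smul_left, inner_smul_right, Complex.conj_ofReal, ha.isSymmetric _ x y]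

theorem mul_alphaDot_add_alphaDot_mul (ha : IsCliffordFamily a) (i : ι)
    (v : EuclideanSpace ℝ ι) : a i * alphaDot a v + alphaDot a v * a i = (2 * v i : ℂ) • 1 := by
  rw [alphaDot, Finset.mul_sum, Finset.sum_mul, ← Finset.sum_add_distrib,
    Finset.sum_eq_single i]
  · rw [mul_smul_comm, smul_mul_assoc, ← smul_add, ← two_smul ℂ (a i * a i), ha.mul_self,
      smul_smul, mul_comm]
  · intro j _ hji
    rw [mul_smul_comm, smul_mul_assoc, ← smul_add, ha.anticomm i j hji.symm, smul_zero]
  · simp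

theorem alphaDot_mul_self (ha : IsCliffordFamily a) (v : EuclideanSpace ℝ ι) :
    alphaDot a v * alphaDot a v = (‖v‖ : ℂ) ^ 2 • 1 := by
  have hsum : ∑ i, (v i : ℂ) • (a i * alphaDot a v + alphaDot a v * a i) =
      (∑ i, (v i : ℂ) • a i) * alphaDot a v + alphaDot a v * ∑ i, (v i : ℂ) • a i := by
    simp only [Finset.sum_mul, Finset.mul_sum, smul_mul_assoc, mul_smul_comm, smul_add,
      Finset.sum_add_distrib]
  have hnorm : (‖v‖ : ℂ) ^ 2 = ∑ i, (v i : ℂ) * v i := by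
    rw [← Complex.ofReal_pow, EuclideanSpace.norm_sq_eq]
    simp only [Real.norm_eq_abs, sq_abs]
    push_cast [sq]
    rfl
  simp only [ha.mul_alphaDot_add_alphaDot_mul, smul_smul, ← Finset.sum_smul] at hsum
  refine smul_right_injective _ (two_ne_zero (α := ℂ)) ?_
  calc (2 : ℂ) • (alphaDot a v * alphaDot a v)
      = (∑ i, (v i : ℂ) * (2 * v i)) • 1 := (two_smul _ _).trans hsum.symm
    _ = (2 : ℂ) • ((‖v‖ : ℂ) ^ 2 • 1) := by
      rw [smul_smul, hnorm, Finset.mul_sum]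
      exact congrArg (· • _) (Finset.sum_congr rfl fun i _ => by ring)

theorem norm_alphaDot_apply (ha : IsCliffordFamily a) (v : EuclideanSpace ℝ ι) (x : H) :
    ‖alphaDot a v x‖ = ‖v‖ * ‖x‖ :=
  (ha.isSymmetric_alphaDot v).norm_map_eq_of_mul_self (norm_nonneg v) (ha.alphaDot_mul_self v) x

theorem inner_apply_of_alphaDot_eq (ha : IsCliffordFamily a) {g : EuclideanSpace ℝ ι} {x y : H}
    (hx : alphaDot a g x = x) (hy : alphaDot a g y = y) (i : ι) :
    ⟪a i x, y⟫_ℂ = g i * ⟪x, y⟫_ℂ := by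
  have h := congrArg (fun T : Module.End ℂ H => ⟪T x, y⟫_ℂ) (ha.mul_alphaDot_add_alphaDot_mul i g)
  simp only [LinearMap.add_apply, Module.End.mul_apply, hx, inner_add_left,
    ha.isSymmetric_alphaDot g (a i x), hy, LinearMap.smul_apply, Module.End.one_apply,
    inner_smul_left, map_mul, map_ofNat, Complex.conj_ofReal] at h
  linear_combination h / 2

theorem alphaDot_diracProj (ha : IsCliffordFamily a) {e : EuclideanSpace ℝ ι} (he : ‖e‖ = 1)
    (z : H) : alphaDot a e (diracProj a e z) = diracProj a e z := by
  rw [← Module.End.mul_apply, diracProj, mul_smul_comm, mul_add, ha.alphaDot_mul_self, he,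
    mul_one, add_comm]
  simp

theorem norm_diracProj_le (ha : IsCliffordFamily a) {e : EuclideanSpace ℝ ι} (he : ‖e‖ = 1)
    (z : H) : ‖diracProj a e z‖ ≤ ‖z‖ := by
  calc ‖diracProj a e z‖ = ‖z + alphaDot a e z‖ / 2 := by
        rw [diracProj, LinearMap.smul_apply, norm_smul, LinearMap.add_apply,
          Module.End.one_apply]
        norm_num
        ring
    _ ≤ (‖z‖ + ‖alphaDot a e z‖) / 2 := by gcongr; exact norm_add_le _ _
    _ = ‖z‖ := by rw [ha.norm_alphaDot_apply, he]; ring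

theorem norm_current_le (ha : IsCliffordFamily a) (x y : H) :
    ‖current a x y‖ ≤ ‖x‖ * ‖y‖ := by
  refine norm_prod_le_iff.2 ⟨norm_inner_le_norm x y, ?_⟩
  refine (pi_norm_le_iff_of_nonneg (by positivity)).2 fun i => ?_
  simpa [current, ha.norm_apply] using norm_inner_le_norm (𝕜 := ℂ) (a i x) y

theorem current_eq_smul_nullVec (ha : IsCliffordFamily a) {g : EuclideanSpace ℝ ι} {x y : H}
    (hx : alphaDot a g x = x) (hy : alphaDot a g y = y) :
    current a x y = ⟪x, y⟫_ℂ • nullVec g := by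
  ext i
  · simp [current, nullVec]
  · simp [current, nullVec, ha.inner_apply_of_alphaDot_eq hx hy, mul_comm]

theorem norm_minkowski_current_nullVec_le (ha : IsCliffordFamily a) {g : EuclideanSpace ℝ ι}
    {x y : H} (hxy : alphaDot a g x = x ∨ alphaDot a g y = y) (h : EuclideanSpace ℝ ι) :
    ‖minkowski (current a x y) (nullVec h)‖ ≤ ‖h - g‖ * (‖x‖ * ‖y‖) := by
  have hg : ⟪x, y⟫_ℂ = ⟪alphaDot a g x, y⟫_ℂ := by
    rcases hxy with hx | hy
    · rw [hx]
    · rw [ha.isSymmetric_alphaDot g, hy]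
  rw [minkowski_current_nullVec, hg, ← inner_sub_left, ← LinearMap.sub_apply, ← alphaDot_sub,
    ← mul_assoc, ← ha.norm_alphaDot_apply]
  exact norm_inner_le_norm _ _

theorem isNearNull_current_add_left (ha : IsCliffordFamily a) {g : EuclideanSpace ℝ ι}
    {x d y : H} {ε : ℝ} (hx : alphaDot a g x = x) (hy : alphaDot a g y = y) (hx1 : ‖x‖ ≤ 1)
    (hy1 : ‖y‖ ≤ 1) (hd : ‖d‖ ≤ ε) : IsNearNull g ε (current a (x + d) y) := by
  have hdy : ‖d‖ * ‖y‖ ≤ ε := (mul_le_of_le_one_right (norm_nonneg d) hy1).trans hd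
  refine ⟨⟪x, y⟫_ℂ, current a d y, by rw [current_add_left, ha.current_eq_smul_nullVec hx hy],
    ?_, (ha.norm_current_le d y).trans hdy, fun h => ?_⟩
  · exact (norm_inner_le_norm x y).trans (mul_le_one₀ hx1 (norm_nonneg y) hy1)
  · exact (ha.norm_minkowski_current_nullVec_le (.inr hy) h).trans (by gcongr)

theorem isNearNull_current_add_right (ha : IsCliffordFamily a) {g : EuclideanSpace ℝ ι}
    {x y d : H} {ε : ℝ} (hx : alphaDot a g x = x) (hy : alphaDot a g y = y) (hx1 : ‖x‖ ≤ 1)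
    (hy1 : ‖y‖ ≤ 1) (hd : ‖d‖ ≤ ε) : IsNearNull g ε (current a x (y + d)) := by
  have hxd : ‖x‖ * ‖d‖ ≤ ε := (mul_le_of_le_one_left (norm_nonneg d) hx1).trans hd
  refine ⟨⟪x, y⟫_ℂ, current a x d, by rw [current_add_right, ha.current_eq_smul_nullVec hx hy],
    ?_, (ha.norm_current_le x d).trans hxd, fun h => ?_⟩
  · exact (norm_inner_le_norm x y).trans (mul_le_one₀ hx1 (norm_nonneg y) hy1)
  · exact (ha.norm_minkowski_current_nullVec_le (.inl hx) h).trans (by gcongr)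

theorem isNearNull_current_diracProj (ha : IsCliffordFamily a) {e₁ e₂ g : EuclideanSpace ℝ ι}
    (he₁ : ‖e₁‖ = 1) (he₂ : ‖e₂‖ = 1) {z₁ z₂ : H} (hz₁ : ‖z₁‖ ≤ 1) (hz₂ : ‖z₂‖ ≤ 1)
    (hg : g = e₁ ∨ g = e₂) :
    IsNearNull g (‖e₁ - e₂‖ / 2) (current a (diracProj a e₁ z₁) (diracProj a e₂ z₂)) := by
  have hP {e : EuclideanSpace ℝ ι} (he : ‖e‖ = 1) {z : H} (hz : ‖z‖ ≤ 1) :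
      ‖diracProj a e z‖ ≤ 1 := (ha.norm_diracProj_le he z).trans hz
  have hD (e : EuclideanSpace ℝ ι) {z : H} (hz : ‖z‖ ≤ 1) :
      ‖((1 / 2 : ℂ) • alphaDot a (e - g)) z‖ ≤ ‖e - g‖ / 2 := by
    rw [LinearMap.smul_apply, norm_smul, ha.norm_alphaDot_apply]
    norm_num
    nlinarith [norm_nonneg (e - g)]
  rcases hg with rfl | rfl
  · rw [diracProj_eq_add a e₂ g, LinearMap.add_apply, norm_sub_rev]
    exact ha.isNearNull_current_add_right (ha.alphaDot_diracProj he₁ z₁)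
      (ha.alphaDot_diracProj he₁ z₂) (hP he₁ hz₁) (hP he₁ hz₂) (hD e₂ hz₂)
  · rw [diracProj_eq_add a e₁ g, LinearMap.add_apply]
    exact ha.isNearNull_current_add_left (ha.alphaDot_diracProj he₂ z₁)
      (ha.alphaDot_diracProj he₂ z₂) (hP he₂ hz₁) (hP he₂ hz₂) (hD e₁ hz₁)

theorem norm_minkowski_current_diracProj_le (ha : IsCliffordFamily a)
    {e₁ e₂ e₃ e₄ g h : EuclideanSpace ℝ ι} (he₁ : ‖e₁‖ = 1) (he₂ : ‖e₂‖ = 1) (he₃ : ‖e₃‖ = 1)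
    (he₄ : ‖e₄‖ = 1) {z₁ z₂ z₃ z₄ : H} (hz₁ : ‖z₁‖ ≤ 1) (hz₂ : ‖z₂‖ ≤ 1) (hz₃ : ‖z₃‖ ≤ 1)
    (hz₄ : ‖z₄‖ ≤ 1) (hg : g = e₁ ∨ g = e₂) (hh : h = e₃ ∨ h = e₄) :
    ‖minkowski (current a (diracProj a e₁ z₁) (diracProj a e₂ z₂))
        (current a (diracProj a e₃ z₃) (diracProj a e₄ z₄))‖ ≤
      (Fintype.card ι + 1) / 4 * (angle e₁ e₂ * angle e₃ e₄) +
        angle g h * max (angle e₁ e₂) (angle e₃ e₄) + angle g h ^ 2 := by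
  have hgu : ‖g‖ = 1 := by rcases hg with rfl | rfl <;> assumption
  have hhu : ‖h‖ = 1 := by rcases hh with rfl | rfl <;> assumption
  have h₁₂ := norm_sub_le_angle he₁ he₂
  have h₃₄ := norm_sub_le_angle he₃ he₄
  have hmax : ‖e₁ - e₂‖ / 2 + ‖e₃ - e₄‖ / 2 ≤ max (angle e₁ e₂) (angle e₃ e₄) := by
    linarith [le_max_left (angle e₁ e₂) (angle e₃ e₄), le_max_right (angle e₁ e₂) (angle e₃ e₄)]
  have hgh := norm_sub_le_angle hgu hhu
  have hεδ : ‖e₁ - e₂‖ / 2 * (‖e₃ - e₄‖ / 2) ≤ angle e₁ e₂ * angle e₃ e₄ / 4 := by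
    linarith [mul_le_mul h₁₂ h₃₄ (norm_nonneg _) (angle_nonneg e₁ e₂)]
  have hcross : ‖g - h‖ * (‖e₁ - e₂‖ / 2 + ‖e₃ - e₄‖ / 2) ≤
      angle g h * max (angle e₁ e₂) (angle e₃ e₄) :=
    mul_le_mul hgh hmax (by positivity) (angle_nonneg g h)
  refine ((ha.isNearNull_current_diracProj he₁ he₂ hz₁ hz₂ hg).norm_minkowski_le
    (ha.isNearNull_current_diracProj he₃ he₄ hz₃ hz₄ hh)).trans ?_
  linarith [norm_minkowski_nullVec_nullVec_le hgu hhu, sq_nonneg (angle g h),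
    mul_le_mul_of_nonneg_left hεδ (by positivity : (0 : ℝ) ≤ Fintype.card ι + 1)]

end IsCliffordFamily

end Clifford

theorem diracAlpha_isHermitian (j : Fin 3) : (diracAlpha j).IsHermitian := by
  fin_cases j <;> ext i k <;> fin_cases i <;> fin_cases k <;> simp [diracAlpha]

theorem diracAlpha_mul_self (j : Fin 3) : diracAlpha j * diracAlpha j = 1 := by
  fin_cases j <;> ext k l <;> fin_cases k <;> fin_cases l <;>
    simp [diracAlpha, Matrix.mul_apply, Fin.sum_univ_four]

theorem diracAlpha_anticomm {i j : Fin 3} (hij : i ≠ j) :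
    diracAlpha i * diracAlpha j + diracAlpha j * diracAlpha i = 0 := by
  fin_cases i <;> fin_cases j <;> (try exact absurd rfl hij) <;>
    ext k l <;> fin_cases k <;> fin_cases l <;> simp [diracAlpha]

theorem isCliffordFamily_diracAlpha :
    IsCliffordFamily fun j => Matrix.toEuclideanLin (diracAlpha j) where
  isSymmetric j := Matrix.isSymmetric_toEuclideanLin_iff.2 (diracAlpha_isHermitian j)
  mul_self j := by
    rw [Module.End.mul_eq_comp, ← Matrix.toLpLin_mul, diracAlpha_mul_self, Matrix.toLpLin_one,
      Module.End.one_eq_id]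
  anticomm i j hij := by
    rw [Module.End.mul_eq_comp, Module.End.mul_eq_comp, ← Matrix.toLpLin_mul,
      ← Matrix.toLpLin_mul, ← map_add, diracAlpha_anticomm hij, map_zero]

theorem toEuclideanLin_diracPi {e : E3} (he : ‖e‖ = 1) :
    Matrix.toEuclideanLin (diracPi e) =
      diracProj (fun j => Matrix.toEuclideanLin (diracAlpha j)) e := by
  simp only [diracPi, diracProj, alphaDot, he, inv_one, one_smul, map_smul, map_add, map_sum,
    Matrix.toLpLin_one, Module.End.one_eq_id]

/-- The quadrilinear null-form estimate: with `θ_{jk}` the angle between `e_j` and `e_k`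
and `φ = min{θ₁₃, θ₁₄, θ₂₃, θ₂₄}`, the quantity
`q = Σ_{μ=0}^3 ⟨α^μ Π(e₁)z₁, Π(e₂)z₂⟩⟨α_μ Π(e₃)z₃, Π(e₄)z₄⟩`
(i.e. `q = −⟨Π(e₁)z₁,Π(e₂)z₂⟩⟨Π(e₃)z₃,Π(e₄)z₄⟩ + Σ_j ⟨αʲΠ(e₁)z₁,Π(e₂)z₂⟩⟨αʲΠ(e₃)z₃,Π(e₄)z₄⟩`)
satisfies `|q| ≲ θ₁₂θ₃₄ + φ·max(θ₁₂,θ₃₄) + φ²`. -/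
theorem quadrilinear_null_structure :
    ∃ C : ℝ, 0 < C ∧
      ∀ (e₁ e₂ e₃ e₄ : E3), ‖e₁‖ = 1 → ‖e₂‖ = 1 → ‖e₃‖ = 1 → ‖e₄‖ = 1 →
      ∀ (z₁ z₂ z₃ z₄ : C4), ‖z₁‖ = 1 → ‖z₂‖ = 1 → ‖z₃‖ = 1 → ‖z₄‖ = 1 →
        ‖(-((inner ℂ ((Matrix.toEuclideanLin (diracPi e₁)) z₁)
                ((Matrix.toEuclideanLin (diracPi e₂)) z₂) : ℂ) *
             (inner ℂ ((Matrix.toEuclideanLin (diracPi e₃)) z₃)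
                ((Matrix.toEuclideanLin (diracPi e₄)) z₄) : ℂ)) +
           ∑ j : Fin 3,
             (inner ℂ ((Matrix.toEuclideanLin (diracAlpha j * diracPi e₁)) z₁)
                ((Matrix.toEuclideanLin (diracPi e₂)) z₂) : ℂ) *
             (inner ℂ ((Matrix.toEuclideanLin (diracAlpha j * diracPi e₃)) z₃)
                ((Matrix.toEuclideanLin (diracPi e₄)) z₄) : ℂ))‖ ≤
          C * (angle e₁ e₂ * angle e₃ e₄ +
            min (min (angle e₁ e₃) (angle e₁ e₄)) (min (angle e₂ e₃) (angle e₂ e₄)) *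
              max (angle e₁ e₂) (angle e₃ e₄) +
            min (min (angle e₁ e₃) (angle e₁ e₄)) (min (angle e₂ e₃) (angle e₂ e₄)) ^ 2) := by
  refine ⟨1, one_pos, fun e₁ e₂ e₃ e₄ he₁ he₂ he₃ he₄ z₁ z₂ z₃ z₄ hz₁ hz₂ hz₃ hz₄ => ?_⟩
  have hmul (j : Fin 3) (e : E3) (z : C4) :
      Matrix.toEuclideanLin (diracAlpha j * diracPi e) z =
        Matrix.toEuclideanLin (diracAlpha j) (Matrix.toEuclideanLin (diracPi e) z) := by
    rw [Matrix.toLpLin_mul, LinearMap.comp_apply]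
  obtain ⟨g, hg, h, hh, hφ⟩ := exists_eq_min_min angle e₁ e₂ e₃ e₄
  have key := isCliffordFamily_diracAlpha.norm_minkowski_current_diracProj_le he₁ he₂ he₃ he₄
    hz₁.le hz₂.le hz₃.le hz₄.le hg hh
  rw [Fintype.card_fin, show ((3 : ℕ) + 1 : ℝ) / 4 = 1 by norm_num, one_mul] at key
  simp only [hmul, toEuclideanLin_diracPi, he₁, he₂, he₃, he₄, ← hφ, one_mul]
  -- the left-hand side is `minkowski (current _ _ _) (current _ _ _)` unfolded
  exact key

end
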